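/- arXiv:2101.02586 — 3 statements merged into one kernel-verified Lean document; each statement's English description precedes it below -/
import Mathlib

section
/- Let A be a finite, generating, sum-full, zero-sum-free subset of an abelian group G, and let B ⊆ A be a Sidon set. Then A \ B generates G. -/
/-!
Let `H` be the subgroup generated by `A \ B` and suppose some element of `B` lies outside `H`.
Writing such an element as `x = b + c` with `b, c ∈ A`, one summand again lies in `B \ H`; so
there is a map `f` on `B \ H` with `x - f x ∈ A`. Following `f` around a cycle
`x₀, x₁, …, x_{k-1}` of distinct points, the differences `xᵢ - xᵢ₊₁` telescope to `0`, and they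
are pairwise distinct because `B` is Sidon. They thus form a nonempty zero-sum subset of `A`.
-/

open Function Set

section

variable {G : Type*} [AddCommGroup G]

def IsSidon (B : Set G) : Prop :=
  ∀ s₁ ∈ B, ∀ s₂ ∈ B, ∀ s₃ ∈ B, ∀ s₄ ∈ B,
    s₁ + s₂ = s₃ + s₄ → (s₁ = s₃ ∧ s₂ = s₄) ∨ (s₁ = s₄ ∧ s₂ = s₃)

theorem IsSidon.mono {B C : Set G} (hB : IsSidon B) (hCB : C ⊆ B) : IsSidon C :=
  fun _ h₁ _ h₂ _ h₃ _ h₄ => hB _ (hCB h₁) _ (hCB h₂) _ (hCB h₃) _ (hCB h₄)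

theorem Set.Finite.exists_iterate_mem_periodicPts {α : Type*} {s : Set α} (hs : s.Finite)
    {f : α → α} (hf : MapsTo f s s) {x : α} (hx : x ∈ s) : ∃ m, f^[m] x ∈ periodicPts f := by
  obtain ⟨m, n, hmn, hmn_eq⟩ :=
    hs.exists_lt_map_eq_of_forall_mem (f := fun n => f^[n] x) fun n => hf.iterate n hx
  refine ⟨m, mk_mem_periodicPts (n := n - m) (by omega) ?_⟩
  change f^[n - m] (f^[m] x) = f^[m] x
  rw [← iterate_add_apply, Nat.sub_add_cancel hmn.le]
  exact hmn_eq.symm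

theorem sum_range_minimalPeriod_iterate_sub (f : G → G) (y : G) :
    ∑ i ∈ Finset.range (minimalPeriod f y), (f^[i] y - f^[i + 1] y) = 0 := by
  rw [Finset.sum_range_sub', iterate_minimalPeriod, iterate_zero_apply, sub_self]

theorem IsSidon.injOn_iterate_sub {B : Set G} (hB : IsSidon B) {f : G → G} {y : G}
    (hyB : ∀ n, f^[n] y ∈ B) :
    InjOn (fun i => f^[i] y - f^[i + 1] y) (Iio (minimalPeriod f y)) := by
  have key : ∀ i j, i < j → j < minimalPeriod f y →
      f^[i] y - f^[i + 1] y ≠ f^[j] y - f^[j + 1] y := by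
    intro i j hij hj hdiff
    have hsum : f^[i] y + f^[j + 1] y = f^[j] y + f^[i + 1] y :=
      sub_eq_sub_iff_add_eq_add.mp hdiff
    have hinj := iterate_injOn_Iio_minimalPeriod (f := f) (x := y)
    rcases hB _ (hyB i) _ (hyB (j + 1)) _ (hyB j) _ (hyB (i + 1)) hsum with ⟨h, -⟩ | ⟨h, -⟩
    · exact hij.ne (hinj (hij.trans hj) hj h)
    · exact (Nat.lt_succ_self i).ne (hinj (hij.trans hj) (by simp only [mem_Iio]; omega) h)
  intro i hi j hj hdiff
  rcases lt_trichotomy i j with h | h | h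
  exacts [absurd hdiff (key i j h hj), h, absurd hdiff.symm (key j i h hi)]

theorem IsSidon.exists_zero_sum_of_mapsTo {A : Finset G} {B : Set G} (hB : IsSidon B)
    (hfin : B.Finite) (hne : B.Nonempty) {f : G → G} (hf : MapsTo f B B)
    (hA : ∀ x ∈ B, x - f x ∈ A) : ∃ S ⊆ A, S.Nonempty ∧ ∑ x ∈ S, x = 0 := by
  classical
  obtain ⟨x, hx⟩ := hne
  obtain ⟨m, hm⟩ := hfin.exists_iterate_mem_periodicPts hf hx
  set y := f^[m] x
  have hyB : ∀ n, f^[n] y ∈ B := fun n => by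
    rw [← iterate_add_apply]; exact hf.iterate _ hx
  refine ⟨(Finset.range (minimalPeriod f y)).image fun i => f^[i] y - f^[i + 1] y, ?_, ?_, ?_⟩
  · intro z hz
    obtain ⟨i, -, rfl⟩ := Finset.mem_image.mp hz
    rw [iterate_succ_apply']
    exact hA _ (hyB i)
  · exact ⟨_, Finset.mem_image_of_mem _
      (Finset.mem_range.mpr (minimalPeriod_pos_of_mem_periodicPts hm))⟩
  · rw [Finset.sum_image fun i hi j hj =>
      hB.injOn_iterate_sub hyB (Finset.mem_range.mp hi) (Finset.mem_range.mp hj)]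
    exact sum_range_minimalPeriod_iterate_sub f y

end

/-- If `A` is finite, generating, sum-full and zero-sum-free and `B ⊆ A` is Sidon,
then `A \ B` generates the group. -/
theorem complement_of_sidon_generates {G : Type*} [AddCommGroup G] [DecidableEq G] (A B : Finset G)
    (hgen : AddSubgroup.closure (A : Set G) = ⊤)
    (hsf : ∀ a ∈ A, ∃ b ∈ A, ∃ c ∈ A, a = b + c)
    (hzsf : ∀ S ⊆ A, S.Nonempty → ∑ x ∈ S, x ≠ 0)
    (hBA : B ⊆ A)
    (hSidon : ∀ s₁ ∈ B, ∀ s₂ ∈ B, ∀ s₃ ∈ B, ∀ s₄ ∈ B,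
      s₁ + s₂ = s₃ + s₄ → (s₁ = s₃ ∧ s₂ = s₄) ∨ (s₁ = s₄ ∧ s₂ = s₃)) :
    AddSubgroup.closure ((A \ B : Finset G) : Set G) = ⊤ := by
  set H := AddSubgroup.closure ((A \ B : Finset G) : Set G)
  have hAB : ∀ x ∈ A, x ∉ B → x ∈ H := fun x hx hxB =>
    AddSubgroup.subset_closure (Finset.mem_sdiff.mpr ⟨hx, hxB⟩)
  suffices hB : ∀ x ∈ B, x ∈ H by
    refine top_le_iff.mp (hgen ▸ (AddSubgroup.closure_le H).mpr fun x hx => ?_)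
    by_cases hxB : x ∈ B
    exacts [hB x hxB, hAB x hx hxB]
  by_contra! ⟨b, hbB, hbH⟩
  set T : Set G := {x | x ∈ B ∧ x ∉ H}
  have hstep : ∀ x ∈ T, ∃ y ∈ T, x - y ∈ A := by
    rintro x ⟨hxB, hxH⟩
    obtain ⟨c, hc, d, hd, rfl⟩ := hsf x (hBA hxB)
    by_cases hcH : c ∈ H
    · have hdH : d ∉ H := fun hdH => hxH (add_mem hcH hdH)
      exact ⟨d, ⟨not_not.mp fun h => hdH (hAB d hd h), hdH⟩, by simpa using hc⟩
    · exact ⟨c, ⟨not_not.mp fun h => hcH (hAB c hc h), hcH⟩, by simpa using hd⟩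
  choose! f hfT hfA using hstep
  have hTSidon : IsSidon T := IsSidon.mono (B := (B : Set G)) hSidon fun _ hx => hx.1
  obtain ⟨S, hSA, hSne, hS0⟩ := hTSidon.exists_zero_sum_of_mapsTo
    (B.finite_toSet.subset fun _ hx => hx.1) ⟨b, hbB, hbH⟩ hfT hfA
  exact hzsf S hSA hSne hS0
end

section
/- Let G be a finite abelian p-group with invariant factors p^{α_1}, …, p^{α_m}. Then the maximal length of a zero-sum-free sequence over G is p^{α_1} + … + p^{α_m} − m. -/
/-!
The lower bound is witnessed by `p ^ αᵢ - 1` copies of each standard generator `eᵢ`.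

For the upper bound (Olson), work in the group algebra `𝔽_p[G]`. The ideal `J` generated by the
elements `1 - X ^ eᵢ` contains every `1 - X ^ g`, since `1 - X ^ (a + b) = (1 - X ^ a) +
X ^ a (1 - X ^ b)` makes `{g | 1 - X ^ g ∈ J}` a subgroup. In characteristic `p`,
`(1 - X ^ eᵢ) ^ p ^ αᵢ = 1 - X ^ (p ^ αᵢ • eᵢ) = 0`, so `J ^ (∑ (p ^ αᵢ - 1) + 1) = 0`. For a
zero-sum-free `T` the product `∏_{g ∈ T} (1 - X ^ g)` lies in `J ^ |T|`, yet its coefficient at `0`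
is `1`, because every monomial of the product sits at a subsum of `T`. Hence
`|T| ≤ ∑ (p ^ αᵢ - 1)`.
-/

open AddMonoidAlgebra

def ZeroSumFree {G : Type*} [AddCommMonoid G] (T : Multiset G) : Prop :=
  ∀ S ≤ T, S ≠ 0 → S.sum ≠ 0

theorem ZeroSumFree.of_le {G : Type*} [AddCommMonoid G] {S T : Multiset G} (hT : ZeroSumFree T)
    (hST : S ≤ T) : ZeroSumFree S :=
  fun U hU => hT U (hU.trans hST)

namespace Multiset

theorem exists_le_map_eq_of_le_map {α β : Type*} {f : α → β} {M : Multiset α}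
    {S : Multiset β} (h : S ≤ M.map f) : ∃ M' ≤ M, M'.map f = S := by
  classical
  induction M using Multiset.induction_on generalizing S with
  | empty => exact ⟨0, le_rfl, (le_zero.mp h).symm⟩
  | cons a M ih =>
    rw [map_cons] at h
    by_cases ha : f a ∈ S
    · obtain ⟨M', hM', hS⟩ := ih (erase_le_iff_le_cons.mpr h)
      exact ⟨a ::ₘ M', cons_le_cons a hM', by rw [map_cons, hS, cons_erase ha]⟩
    · obtain ⟨M', hM', hS⟩ := ih ((le_cons_of_notMem ha).mp h)
      exact ⟨M', hM'.trans (le_cons_self M a), hS⟩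

theorem sum_map_piSingle_one_apply {ι : Type*} [DecidableEq ι] {R : ι → Type*}
    [∀ i, AddCommMonoidWithOne (R i)] (M : Multiset ι) (j : ι) :
    (M.map fun i => (Pi.single i 1 : ∀ i, R i)).sum j = M.count j := by
  induction M using Multiset.induction_on with
  | empty => simp
  | cons a M ih =>
    rcases eq_or_ne a j with rfl | h
    · simp [ih, add_comm]
    · simp [ih, h.symm]

end Multiset

theorem zeroSumFree_map_piSingle_one {ι : Type*} [DecidableEq ι] (n : ι → ℕ) {M : Multiset ι}
    (hM : ∀ i, M.count i < n i) :
    ZeroSumFree (M.map fun i => (Pi.single i 1 : ∀ i, ZMod (n i))) := by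
  intro S hS hS0 hsum
  obtain ⟨M', hM', rfl⟩ := Multiset.exists_le_map_eq_of_le_map hS
  have hcount : ∀ j, M'.count j = 0 := fun j => by
    have h := congrFun hsum j
    rw [Multiset.sum_map_piSingle_one_apply, Pi.zero_apply, ZMod.natCast_eq_zero_iff] at h
    exact Nat.eq_zero_of_dvd_of_lt h ((Multiset.count_le_of_le j hM').trans_lt (hM j))
  have hM'0 : M' = 0 :=
    Multiset.eq_zero_of_forall_notMem fun j => Multiset.count_eq_zero.mp (hcount j)
  exact hS0 (by rw [hM'0, Multiset.map_zero])

theorem AddSubgroup.closure_range_piSingle_one {ι : Type*} [Fintype ι] [DecidableEq ι]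
    (n : ι → ℕ) : closure (Set.range fun i => (Pi.single i 1 : ∀ i, ZMod (n i))) = ⊤ := by
  refine eq_top_iff.mpr fun g _ => ?_
  rw [← Finset.univ_sum_single g]
  refine sum_mem fun i _ => ?_
  rw [← ZMod.intCast_zmod_cast (g i), ← zsmul_one, Pi.single_smul]
  exact zsmul_mem (subset_closure (Set.mem_range_self i)) _

namespace Ideal

variable {R : Type*} [CommSemiring R]

theorem sup_pow_add_add_one_le (I J : Ideal R) (n m : ℕ) :
    (I ⊔ J) ^ (n + m + 1) ≤ I ^ (n + 1) ⊔ J ^ (m + 1) := by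
  rw [← add_eq_sup, ← add_eq_sup, add_pow, sum_eq_sup]
  refine Finset.sup_le fun i hi => ?_
  by_cases hn : n + 1 ≤ i
  · exact mul_le_left.trans (mul_le_left.trans ((pow_le_pow_right hn).trans le_sup_left))
  · refine mul_le_left.trans (mul_le_right.trans ((pow_le_pow_right ?_).trans le_sup_right))
    rw [Finset.mem_range] at hi
    omega

theorem span_image_pow_eq_bot {ι : Type*} (s : Finset ι) (y : ι → R) (q : ι → ℕ)
    (hy : ∀ i ∈ s, y i ^ (q i + 1) = 0) : span (y '' s) ^ (∑ i ∈ s, q i + 1) = ⊥ := by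
  classical
  induction s using Finset.induction_on with
  | empty => simp
  | insert a s ha ih =>
    rw [Finset.coe_insert, Set.image_insert_eq, span_insert, Finset.sum_insert ha, add_assoc,
      eq_bot_iff]
    refine (sup_pow_add_add_one_le _ _ _ _).trans (sup_le ?_ ?_)
    · rw [span_singleton_pow, hy a (Finset.mem_insert_self a s), span_singleton_zero]
    · rw [ih fun i hi => hy i (Finset.mem_insert_of_mem hi)]

theorem multiset_prod_mem_pow {I : Ideal R} {T : Multiset R} (hT : ∀ x ∈ T, x ∈ I) :
    T.prod ∈ I ^ Multiset.card T := by
  induction T using Multiset.induction_on with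
  | empty => simp
  | cons a T ih =>
    rw [Multiset.prod_cons, Multiset.card_cons, pow_succ']
    exact mul_mem_mul (hT a (Multiset.mem_cons_self a T))
      (ih fun x hx => hT x (Multiset.mem_cons_of_mem hx))

end Ideal

namespace AddMonoidAlgebra

variable {k G : Type*}

instance charP [Semiring k] [AddMonoid G] (p : ℕ) [CharP k p] : CharP k[G] p :=
  charP_of_injective_ringHom (f := singleZeroRingHom) single_right_injective p

theorem one_sub_single_add [Ring k] [AddMonoid G] (a b : G) :
    (1 - single (a + b) 1 : k[G]) = (1 - single a 1) + single a 1 * (1 - single b 1) := by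
  rw [mul_sub, mul_one, single_mul_single, one_mul]
  abel

theorem one_sub_single_mem_of_mem_closure [Ring k] [AddGroup G] {J : Ideal k[G]} {s : Set G}
    (hs : ∀ g ∈ s, (1 - single g 1 : k[G]) ∈ J) {g : G} (hg : g ∈ AddSubgroup.closure s) :
    (1 - single g 1 : k[G]) ∈ J := by
  induction hg using AddSubgroup.closure_induction with
  | mem g hg => exact hs g hg
  | zero => rw [← one_def, sub_self]; exact J.zero_mem
  | add a b _ _ ha hb => rw [one_sub_single_add]; exact J.add_mem ha (J.mul_mem_left _ hb)
  | neg a _ ha =>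
    have h : (1 - single (-a) 1 : k[G]) = -(single (-a) 1 * (1 - single a 1)) := by
      rw [mul_sub, mul_one, single_mul_single, neg_add_cancel, one_mul, ← one_def, neg_sub]
    rw [h]
    exact J.neg_mem (J.mul_mem_left _ ha)

theorem one_sub_single_pow_char_pow [CommRing k] [AddCommMonoid G] (p : ℕ) [Fact p.Prime]
    [CharP k p] (g : G) (n : ℕ) :
    (1 - single g 1 : k[G]) ^ p ^ n = 1 - single (p ^ n • g) 1 := by
  rw [sub_pow_char_pow, one_pow, single_pow, one_pow]

theorem coeff_one_sub_single_mul [Ring k] [AddGroup G] (g a : G) (x : k[G]) :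
    ((1 - single g 1) * x).coeff a = x.coeff a - x.coeff (-g + a) := by
  rw [sub_mul, one_mul, coeff_sub, Finsupp.sub_apply, coeff_single_mul_apply, one_mul]

theorem exists_le_sum_eq_of_coeff_prod_ne_zero [CommRing k] [AddCommGroup G] {T : Multiset G}
    {a : G} (h : (T.map fun g => (1 - single g 1 : k[G])).prod.coeff a ≠ 0) :
    ∃ S ≤ T, S.sum = a := by
  induction T using Multiset.induction_on generalizing a with
  | empty =>
    refine ⟨0, le_rfl, ?_⟩
    by_contra ha
    rw [Multiset.sum_zero] at ha
    exact h (by simp [one_def, Finsupp.single_eq_of_ne' ha])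
  | cons g T ih =>
    rw [Multiset.map_cons, Multiset.prod_cons, coeff_one_sub_single_mul] at h
    by_cases ha : (T.map fun g => (1 - single g 1 : k[G])).prod.coeff a = 0
    · obtain ⟨S, hS, hsum⟩ := ih (a := -g + a) (by rwa [ha, zero_sub, neg_ne_zero] at h)
      refine ⟨g ::ₘ S, Multiset.cons_le_cons g hS, ?_⟩
      rw [Multiset.sum_cons, hsum, add_neg_cancel_left]
    · obtain ⟨S, hS, hsum⟩ := ih ha
      exact ⟨S, hS.trans (Multiset.le_cons_self T g), hsum⟩

theorem _root_.ZeroSumFree.coeff_zero_prod_one_sub_single [CommRing k] [AddCommGroup G]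
    {T : Multiset G} (hT : ZeroSumFree T) :
    (T.map fun g => (1 - single g 1 : k[G])).prod.coeff 0 = 1 := by
  induction T using Multiset.induction_on with
  | empty => simp
  | cons g T ih =>
    have hg : (T.map fun g => (1 - single g 1 : k[G])).prod.coeff (-g + 0) = 0 := by
      by_contra h
      obtain ⟨S, hS, hsum⟩ := exists_le_sum_eq_of_coeff_prod_ne_zero h
      exact hT (g ::ₘ S) (Multiset.cons_le_cons g hS) Multiset.cons_ne_zero
        (by rw [Multiset.sum_cons, hsum, add_neg_cancel_left])
    rw [Multiset.map_cons, Multiset.prod_cons, coeff_one_sub_single_mul, hg, sub_zero,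
      ih (hT.of_le (Multiset.le_cons_self T g))]

end AddMonoidAlgebra

theorem ZeroSumFree.card_le {p : ℕ} [Fact p.Prime] {G ι : Type*} [AddCommGroup G] [Fintype ι]
    {e : ι → G} (he : AddSubgroup.closure (Set.range e) = ⊤) (α : ι → ℕ)
    (hα : ∀ i, p ^ α i • e i = 0) {T : Multiset G} (hT : ZeroSumFree T) :
    Multiset.card T ≤ ∑ i, (p ^ α i - 1) := by
  set J : Ideal (ZMod p)[G] := Ideal.span (Set.range fun i => 1 - single (e i) 1) with hJ_def
  have hJ : J ^ (∑ i, (p ^ α i - 1) + 1) = ⊥ := by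
    rw [hJ_def, ← Set.image_univ, ← Finset.coe_univ]
    refine Ideal.span_image_pow_eq_bot _ _ _ fun i _ => ?_
    rw [Nat.sub_add_cancel (Nat.one_le_pow _ _ (Fact.out : p.Prime).pos),
      one_sub_single_pow_char_pow p, hα, ← one_def, sub_self]
  have hmem : (T.map fun g => (1 - single g 1 : (ZMod p)[G])).prod ∈ J ^ Multiset.card T := by
    rw [← Multiset.card_map (fun g => (1 - single g 1 : (ZMod p)[G])) T]
    refine Ideal.multiset_prod_mem_pow fun x hx => ?_
    obtain ⟨g, -, rfl⟩ := Multiset.mem_map.mp hx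
    refine one_sub_single_mem_of_mem_closure ?_ (he ▸ AddSubgroup.mem_top g)
    rintro _ ⟨i, rfl⟩
    exact Ideal.subset_span ⟨i, rfl⟩
  by_contra! hlt
  have hzero := Ideal.pow_le_pow_right hlt hmem
  rw [hJ, Ideal.mem_bot] at hzero
  simpa [hzero] using hT.coeff_zero_prod_one_sub_single (k := ZMod p)

theorem olson_max_zerosumfree_length_general (p : ℕ) (hp : p.Prime) (m : ℕ) (α : Fin m → ℕ) :
    IsGreatest {n : ℕ | ∃ T : Multiset (∀ i : Fin m, ZMod (p ^ α i)),
        Multiset.card T = n ∧ ∀ S ≤ T, S ≠ 0 → S.sum ≠ 0}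
      ((∑ i, p ^ α i) - m) := by
  have := Fact.mk hp
  have hpow_pos : ∀ i, 0 < p ^ α i := fun i => pow_pos hp.pos _
  have hsum : ∑ i, (p ^ α i - 1) = (∑ i, p ^ α i) - m := by
    rw [Finset.sum_tsub_distrib _ fun i _ => hpow_pos i]
    simp
  refine ⟨⟨(∑ i, Multiset.replicate (p ^ α i - 1) i).map fun i => Pi.single i 1, ?_, ?_⟩, ?_⟩
  · simp [Multiset.card_sum, hsum]
  · refine zeroSumFree_map_piSingle_one _ fun i => ?_
    simp [Multiset.count_sum', Multiset.count_replicate, hpow_pos i]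
  · rintro n ⟨T, rfl, hT⟩
    refine hsum ▸ ZeroSumFree.card_le (AddSubgroup.closure_range_piSingle_one _) α
      (fun i => ?_) hT
    rw [← Pi.single_smul, nsmul_one, ZMod.natCast_self, Pi.single_zero]

/-- Olson's theorem: the maximal length of a zero-sum-free sequence over the abelian
`p`-group with invariants `p^{α_1}, …, p^{α_m}` equals `p^{α_1} + ⋯ + p^{α_m} - m`. -/
theorem olson_max_zerosumfree_length (p : ℕ) (hp : p.Prime) (m : ℕ) (α : Fin m → ℕ)
    (hα : ∀ i, 1 ≤ α i) :
    IsGreatest {n : ℕ | ∃ T : Multiset (∀ i : Fin m, ZMod (p ^ α i)),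
        Multiset.card T = n ∧ ∀ S ≤ T, S ≠ 0 → S.sum ≠ 0}
      ((∑ i, p ^ α i) - m) :=
  olson_max_zerosumfree_length_general p hp m α
end

section
/- The problem of the existence of a finite, nonempty, sum-full, zero-sum-free subset of the reals is equivalent to the corresponding problem for the integers: if there exists a finite nonempty sum-full zero-sum-free subset A ⊆ ℝ, then there exists one in ℤ. -/
/-!
View `ℝ` as a `ℚ`-vector space. For a zero-sum-free `A`, the nonempty subset sums of `A` are
finitely many nonzero vectors. Since `ℚ` is infinite, some `ℚ`-linear functional
`f` vanishes on none of them. Additive maps preserve sum-fullness, and `f` keeps every nonempty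
subset sum nonzero, so `f(A) ⊆ ℚ` is sum-full and zero-sum-free. Multiplying by a common
denominator moves it into `ℤ`.
-/

open Finset

section SumFull

variable {M N : Type*} [AddCommMonoid M] [AddCommMonoid N]

def IsSumFull (A : Finset M) : Prop := ∀ a ∈ A, ∃ b ∈ A, ∃ c ∈ A, a = b + c

def IsZeroSumFree (A : Finset M) : Prop := ∀ S ⊆ A, S.Nonempty → ∑ x ∈ S, x ≠ 0

variable [DecidableEq N] {A : Finset M} {φ : M →+ N}

theorem IsSumFull.image (hA : IsSumFull A) (φ : M →+ N) : IsSumFull (A.image φ) := by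
  intro y hy
  obtain ⟨a, ha, rfl⟩ := mem_image.mp hy
  obtain ⟨b, hb, c, hc, rfl⟩ := hA a ha
  exact ⟨φ b, mem_image_of_mem φ hb, φ c, mem_image_of_mem φ hc, map_add φ b c⟩

theorem IsZeroSumFree.image (hφ : ∀ S ⊆ A, S.Nonempty → φ (∑ x ∈ S, x) ≠ 0) :
    IsZeroSumFree (A.image φ) := by
  intro T hT hTne
  obtain ⟨S, hSA, hinj, rfl⟩ :=
    exists_subset_injOn_image_eq_of_surjOn (A : Set M) T (fun y hy => by simpa using hT hy)
  rw [sum_image hinj, ← map_sum]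
  exact hφ S (mod_cast hSA) (image_nonempty.mp hTne)

theorem IsSumFull.of_image (hφ : Function.Injective φ) (h : IsSumFull (A.image φ)) :
    IsSumFull A := by
  intro a ha
  obtain ⟨_, hφb, _, hφc, habc⟩ := h (φ a) (mem_image_of_mem φ ha)
  obtain ⟨b, hb, rfl⟩ := mem_image.mp hφb
  obtain ⟨c, hc, rfl⟩ := mem_image.mp hφc
  exact ⟨b, hb, c, hc, hφ (by rw [habc, map_add])⟩

theorem IsZeroSumFree.of_image (hφ : Function.Injective φ) (h : IsZeroSumFree (A.image φ)) :
    IsZeroSumFree A := by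
  intro S hSA hSne hS
  refine h (S.image φ) (image_subset_image hSA) (hSne.image φ) ?_
  rw [sum_image hφ.injOn, ← map_sum, hS, map_zero]

end SumFull

theorem IsZeroSumFree.exists_dual_sum_ne_zero {K V : Type*} [Field K] [Infinite K]
    [AddCommGroup V] [Module K V] {A : Finset V} (hA : IsZeroSumFree A) :
    ∃ f : Module.Dual K V, ∀ S ⊆ A, S.Nonempty → f (∑ x ∈ S, x) ≠ 0 := by
  classical
  let I := A.powerset.filter Finset.Nonempty
  have hI (S : I) : S.1 ⊆ A ∧ S.1.Nonempty := by
    obtain ⟨hS, hSne⟩ := mem_filter.mp S.2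
    exact ⟨mem_powerset.mp hS, hSne⟩
  obtain ⟨f, hf⟩ := Module.exists_dual_forall_apply_ne_zero (K := K)
    (fun S : I => ∑ x ∈ S.1, x) (fun S => hA S.1 (hI S).1 (hI S).2)
  exact ⟨f, fun S hSA hSne => hf ⟨S, by simp [I, hSA, hSne]⟩⟩

theorem Finset.exists_pos_nat_mul_eq_intCast (B : Finset ℚ) :
    ∃ D : ℕ, 0 < D ∧ ∀ q ∈ B, ∃ z : ℤ, (z : ℚ) = D * q := by
  refine ⟨∏ q ∈ B, q.den, prod_pos fun q _ => q.den_pos, fun q hq => ?_⟩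
  obtain ⟨k, hk⟩ := dvd_prod_of_mem Rat.den hq
  exact ⟨k * q.num, by rw [hk]; push_cast; rw [← Rat.den_mul_eq_num]; ring⟩

/-- If there is a finite nonempty sum-full zero-sum-free set of reals, then there is
one consisting of integers. -/
theorem real_to_int_reduction
    (h : ∃ A : Finset ℝ, A.Nonempty ∧ (∀ a ∈ A, ∃ b ∈ A, ∃ c ∈ A, a = b + c) ∧
      ∀ S ⊆ A, S.Nonempty → ∑ x ∈ S, x ≠ 0) :
    ∃ A : Finset ℤ, A.Nonempty ∧ (∀ a ∈ A, ∃ b ∈ A, ∃ c ∈ A, a = b + c) ∧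
      ∀ S ⊆ A, S.Nonempty → ∑ x ∈ S, x ≠ 0 := by
  obtain ⟨A, hne, hfull, hfree⟩ : ∃ A : Finset ℝ, A.Nonempty ∧ IsSumFull A ∧ IsZeroSumFree A := h
  show ∃ B : Finset ℤ, B.Nonempty ∧ IsSumFull B ∧ IsZeroSumFree B
  obtain ⟨f, hf⟩ := hfree.exists_dual_sum_ne_zero (K := ℚ)
  obtain ⟨D, hD, hDf⟩ := (A.image f).exists_pos_nat_mul_eq_intCast
  let φ : ℝ →+ ℚ := (AddMonoidHom.mulLeft (D : ℚ)).comp f.toAddMonoidHom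
  have hφ : ↑(A.image φ) ⊆ ((↑) : ℤ → ℚ) '' Set.univ := by
    simpa [φ, Set.subset_def] using fun a ha => hDf (f a) (mem_image_of_mem f ha)
  obtain ⟨B, -, hB⟩ := subset_set_image_iff.mp hφ
  have hcast : Function.Injective (Int.castAddHom ℚ) := Int.cast_injective
  refine ⟨B, image_nonempty.mp (hB ▸ hne.image φ), ?_, ?_⟩
  · exact IsSumFull.of_image hcast (by simpa [hB] using hfull.image φ)
  · refine IsZeroSumFree.of_image hcast ?_
    simpa [hB] using IsZeroSumFree.image fun S hSA hSne =>
      mul_ne_zero (Nat.cast_ne_zero.mpr hD.ne') (hf S hSA hSne)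
end
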